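/- Let G be a snark of oddness two, F a 2-factor of G with precisely two odd cycles, and M a maximum matching in F. If the main component of H = G − M is a Θ-graph, then G has a proper (Z_4 × Z_2)-coloring. -/

import Mathlib

open SimpleGraph

variable {V : Type*}

/-- A cubic graph: every vertex has exactly `3` neighbours. -/
def IsCubic (G : SimpleGraph V) : Prop :=
  ∀ v : V, (G.neighborSet v).ncard = 3

/-- Two edges (as elements of `Sym2 V`) are adjacent if they are distinct and
share an endpoint. -/
def EdgesAdj (e₁ e₂ : Sym2 V) : Prop :=
  e₁ ≠ e₂ ∧ ∃ v : V, v ∈ e₁ ∧ v ∈ e₂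

/-- `G` has a proper `3`-edge-coloring. -/
def HasProper3EdgeColoring (G : SimpleGraph V) : Prop :=
  ∃ c : Sym2 V → Fin 3,
    ∀ e₁ ∈ G.edgeSet, ∀ e₂ ∈ G.edgeSet, EdgesAdj e₁ e₂ → c e₁ ≠ c e₂

/-- A bridgeless graph: no edge is a bridge. -/
def IsBridgeless (G : SimpleGraph V) : Prop :=
  ∀ e ∈ G.edgeSet, ¬ G.IsBridge e

/-- A snark: a connected bridgeless cubic graph admitting no proper
`3`-edge-coloring. -/
def IsSnark (G : SimpleGraph V) : Prop :=
  G.Connected ∧ IsBridgeless G ∧ IsCubic G ∧ ¬ HasProper3EdgeColoring G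

/-- A proper abelian coloring of `G` by the abelian group `A`: every edge gets a
nonzero color, adjacent edges get distinct colors, and at every vertex the
colors of the incident edges sum to zero. -/
def IsProperAbelianColoring {A : Type*} [AddCommGroup A]
    (G : SimpleGraph V) (σ : Sym2 V → A) : Prop :=
  (∀ e ∈ G.edgeSet, σ e ≠ 0) ∧
  (∀ e₁ ∈ G.edgeSet, ∀ e₂ ∈ G.edgeSet, EdgesAdj e₁ e₂ → σ e₁ ≠ σ e₂) ∧
  (∀ v : V, ∑ᶠ e ∈ G.incidenceSet v, σ e = 0)

/-- `F` is a `2`-factor of `G`: a spanning `2`-regular subgraph. -/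
def IsTwoFactor (G F : SimpleGraph V) : Prop :=
  F ≤ G ∧ ∀ v : V, (F.neighborSet v).ncard = 2

/-- `M` is a matching contained in the edge set of `F`. -/
def IsMatchingIn (M : Set (Sym2 V)) (F : SimpleGraph V) : Prop :=
  M ⊆ F.edgeSet ∧ ∀ e₁ ∈ M, ∀ e₂ ∈ M, e₁ ≠ e₂ → ¬ ∃ v : V, v ∈ e₁ ∧ v ∈ e₂

/-- A perfect matching in `F`: a matching covering every vertex. -/
def IsPerfectMatchingIn (M : Set (Sym2 V)) (F : SimpleGraph V) : Prop :=
  IsMatchingIn M F ∧ ∀ v : V, ∃ e ∈ M, v ∈ e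

/-- A maximum matching in `F`: a matching of maximum cardinality. -/
def IsMaximumMatchingIn (M : Set (Sym2 V)) (F : SimpleGraph V) : Prop :=
  IsMatchingIn M F ∧ ∀ M' : Set (Sym2 V), IsMatchingIn M' F → M'.ncard ≤ M.ncard

/-- A `3`-vertex of `H`: a vertex of degree `3`. -/
def IsThreeVertex (H : SimpleGraph V) (v : V) : Prop := (H.neighborSet v).ncard = 3

/-- A `2`-vertex of `H`: a vertex of degree `2`. -/
def IsTwoVertex (H : SimpleGraph V) (v : V) : Prop := (H.neighborSet v).ncard = 2

/-- An `F`-path in `H`: a (nontrivial) path in `H` whose two end-vertices are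
`3`-vertices of `H`, whose interior vertices are all `2`-vertices of `H`, and
whose two end-edges belong to `F`. -/
structure FPathIn (H F : SimpleGraph V) where
  a : V
  b : V
  walk : H.Walk a b
  isPath : walk.IsPath
  len_pos : 0 < walk.length
  ends_three : IsThreeVertex H a ∧ IsThreeVertex H b
  interior_two : ∀ w ∈ walk.support, w ≠ a → w ≠ b → IsTwoVertex H w
  end_edges : ∀ e ∈ walk.edges, (a ∈ e ∨ b ∈ e) → e ∈ F.edgeSet

/-- The vertices of an `F`-path. -/
def FPathIn.supp {H F : SimpleGraph V} (P : FPathIn H F) : Set V :=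
  {v | v ∈ P.walk.support}

/-- The edges of an `F`-path. -/
def FPathIn.edgeSet {H F : SimpleGraph V} (P : FPathIn H F) : Set (Sym2 V) :=
  {e | e ∈ P.walk.edges}

/-- An `F`-matching of `H`: a collection of pairwise vertex-disjoint `F`-paths
such that every `3`-vertex of `H` lies on (exactly) one of them. -/
def IsFMatching (H F : SimpleGraph V) (Ps : Set (FPathIn H F)) : Prop :=
  (∀ P ∈ Ps, ∀ Q ∈ Ps, P ≠ Q → Disjoint P.supp Q.supp) ∧
  (∀ v : V, IsThreeVertex H v → ∃ P ∈ Ps, v ∈ P.supp)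

/-- The set of edges lying on the paths of an `F`-matching. -/
def FMatchingEdges {H F : SimpleGraph V} (Ps : Set (FPathIn H F)) : Set (Sym2 V) :=
  {e | ∃ P ∈ Ps, e ∈ P.walk.edges}

/-- The `F`-complement of an `F`-matching: the subgraph of `H` induced by the
edges of `H` not lying on the paths of `Ps`. -/
def FComplement {H F : SimpleGraph V} (Ps : Set (FPathIn H F)) : SimpleGraph V :=
  H.deleteEdges (FMatchingEdges Ps)

/-- The number of `3`-vertices of `H` lying on a connected component `c` of `K`. -/
noncomputable def threeCount (H : SimpleGraph V) {K : SimpleGraph V} (c : K.ConnectedComponent) : ℕ :=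
  {v ∈ c.supp | IsThreeVertex H v}.ncard

/-- The graph `K` (an `F`-complement, whose nontrivial components are the
loops) is `3`-even w.r.t. `H`: every component carries an even number of
`3`-vertices of `H`. -/
def IsThreeEvenComplement (H K : SimpleGraph V) : Prop :=
  ∀ c : K.ConnectedComponent, Even (threeCount H c)

/-- A component of `K` is a `3`-odd loop if it carries an odd number of
`3`-vertices of `H`. -/
def Is3OddLoop (H : SimpleGraph V) {K : SimpleGraph V} (c : K.ConnectedComponent) : Prop :=
  Odd (threeCount H c)

/-- The number of odd components (odd cycles, for a `2`-factor) of `F`. -/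
noncomputable def oddCompCount (F : SimpleGraph V) : ℕ :=
  {c : F.ConnectedComponent | Odd c.supp.ncard}.ncard

/-- The number of even components (even cycles, for a `2`-factor) of `F`. -/
noncomputable def evenCompCount (F : SimpleGraph V) : ℕ :=
  {c : F.ConnectedComponent | Even c.supp.ncard}.ncard

/-- The oddness of `G`: the minimum number of odd cycles in a `2`-factor of `G`. -/
noncomputable def oddness (G : SimpleGraph V) : ℕ :=
  sInf {n : ℕ | ∃ F : SimpleGraph V, IsTwoFactor G F ∧ oddCompCount F = n}

/-- `v` lies on an odd component (odd cycle) of `F`. -/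
def OnOddCycle (F : SimpleGraph V) (v : V) : Prop :=
  Odd ((F.connectedComponentMk v).supp.ncard)

/-- A simple `F`-matching: an `F`-matching such that on each of its paths the
only edges lying on odd cycles of `F` are the edges incident to the
end-vertices. -/
def IsSimpleFMatching (H F : SimpleGraph V) (Ps : Set (FPathIn H F)) : Prop :=
  IsFMatching H F Ps ∧
  ∀ P ∈ Ps, ∀ e ∈ P.walk.edges,
    (e ∈ F.edgeSet ∧ ∀ w ∈ e, OnOddCycle F w) → (P.a ∈ e ∨ P.b ∈ e)

/-- The set `C ⊆ V` carries a `Θ`-graph structure in `H`: two distinct vertices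
joined by three internally disjoint paths whose union is exactly the part of
`H` on `C`. -/
def IsThetaOn (H : SimpleGraph V) (C : Set V) : Prop :=
  ∃ a b : V, a ≠ b ∧ ∃ p q r : H.Walk a b,
    p.IsPath ∧ q.IsPath ∧ r.IsPath ∧ p ≠ q ∧ p ≠ r ∧ q ≠ r ∧
    (∀ w ∈ p.support, w ∈ q.support → w = a ∨ w = b) ∧
    (∀ w ∈ p.support, w ∈ r.support → w = a ∨ w = b) ∧
    (∀ w ∈ q.support, w ∈ r.support → w = a ∨ w = b) ∧
    C = {w | w ∈ p.support ∨ w ∈ q.support ∨ w ∈ r.support} ∧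
    (∀ e ∈ H.edgeSet, (∀ w ∈ e, w ∈ C) → e ∈ p.edges ∨ e ∈ q.edges ∨ e ∈ r.edges)

/-- The set `C ⊆ V` carries a kayak-paddle graph structure in `H`: two
vertex-disjoint cycles joined by a path, their union being exactly the part of
`H` on `C`. -/
def IsKayakPaddleOn (H : SimpleGraph V) (C : Set V) : Prop :=
  ∃ a b : V, ∃ (c₁ : H.Walk a a) (c₂ : H.Walk b b) (p : H.Walk a b),
    c₁.IsCycle ∧ c₂.IsCycle ∧ p.IsPath ∧
    (∀ w ∈ c₁.support, w ∉ c₂.support) ∧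
    (∀ w ∈ p.support, w ∈ c₁.support → w = a) ∧
    (∀ w ∈ p.support, w ∈ c₂.support → w = b) ∧
    C = {w | w ∈ c₁.support ∨ w ∈ c₂.support ∨ w ∈ p.support} ∧
    (∀ e ∈ H.edgeSet, (∀ w ∈ e, w ∈ C) → e ∈ c₁.edges ∨ e ∈ c₂.edges ∨ e ∈ p.edges)

/-- The set `C ⊆ V` carries an even cycle of `H` whose vertices and edges are
exactly the part of `H` on `C`. -/
def IsEvenCycleOn (H : SimpleGraph V) (C : Set V) : Prop :=
  ∃ a : V, ∃ W : H.Walk a a, W.IsCycle ∧ Even W.length ∧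
    C = {w | w ∈ W.support} ∧
    (∀ e ∈ H.edgeSet, (∀ w ∈ e, w ∈ C) → e ∈ W.edges)

/-- `Meven` is a perfect matching of the even part `F_even` of the `2`-factor
`F`: a matching of `F` using only edges on even cycles and covering all
vertices of even cycles. -/
def IsPerfectMatchingOfEvenPart (Meven : Set (Sym2 V)) (F : SimpleGraph V) : Prop :=
  IsMatchingIn Meven F ∧
  (∀ e ∈ Meven, ∀ w ∈ e, ¬ OnOddCycle F w) ∧
  (∀ v : V, ¬ OnOddCycle F v → ∃ e ∈ Meven, v ∈ e)

/-- Two odd components `c₁`, `c₂` of `F` are linked in `H_odd = G − M_even`: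
there is a path of `H_odd` from `c₁` to `c₂` all of whose interior vertices
avoid odd cycles of `F` (i.e. are `2`-vertices of `H_odd`). -/
def OddCompLinked (G F : SimpleGraph V) (Meven : Set (Sym2 V))
    (c₁ c₂ : F.ConnectedComponent) : Prop :=
  ∃ u v : V, u ∈ c₁.supp ∧ v ∈ c₂.supp ∧
    ∃ W : (G.deleteEdges Meven).Walk u v, W.IsPath ∧ 0 < W.length ∧
      ∀ w ∈ W.support, w ≠ u → w ≠ v → ¬ OnOddCycle F w

/-- The odd-cycle-incidence graph `K_odd`: vertices are the odd cycles of `F`,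
two of them being adjacent iff they are linked by a path of
`H_odd = G − M_even` with all interior vertices `2`-vertices of `H_odd`
(this is `H_odd` with the edges of `F_odd` contracted and the `2`-vertices
suppressed). -/
def Kodd (G F : SimpleGraph V) (Meven : Set (Sym2 V)) :
    SimpleGraph {c : F.ConnectedComponent // Odd c.supp.ncard} where
  Adj c₁ c₂ := c₁ ≠ c₂ ∧
    (OddCompLinked G F Meven c₁.1 c₂.1 ∨ OddCompLinked G F Meven c₂.1 c₁.1)
  symm := ⟨fun c₁ c₂ h => ⟨h.1.symm, h.2.symm⟩⟩
  loopless := ⟨fun c h => h.1 rfl⟩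

/-- The set of edges of `K` lying on the connected component `c` of `K`. -/
def compEdgeSet (K : SimpleGraph V) (c : K.ConnectedComponent) : Set (Sym2 V) :=
  {e ∈ K.edgeSet | ∃ w, w ∈ e ∧ w ∈ c.supp}

/-- The set `E_Ps` of end-edges of the paths of an `F`-matching `Ps`. -/
def endEdges {H F : SimpleGraph V} (Ps : Set (FPathIn H F)) : Set (Sym2 V) :=
  {e | ∃ P ∈ Ps, e ∈ P.walk.edges ∧ (P.a ∈ e ∨ P.b ∈ e)}

/-- The edge set attached to a vertex of the loop-cycle-incidence graph `B`:
a component of `F − E_Ps`, a loop of the `F`-complement `ℒ`, or a path of `Ps`. -/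
def bEdgeSet (F : SimpleGraph V) {H : SimpleGraph V} (Ps : Set (FPathIn H F)) :
    (F.deleteEdges (endEdges Ps)).ConnectedComponent ⊕
      ((FComplement Ps).ConnectedComponent ⊕ ↥Ps) → Set (Sym2 V)
  | Sum.inl C => compEdgeSet (F.deleteEdges (endEdges Ps)) C
  | Sum.inr (Sum.inl c) => compEdgeSet (FComplement Ps) c
  | Sum.inr (Sum.inr P) => FPathIn.edgeSet P.1

/-- The loop-cycle-incidence graph `B`: a bipartite graph on
`𝒞* ⊕ (ℒ ⊕ Ps)`, where `𝒞*` is the set of components of `F − E_Ps`, `ℒ` the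
set of components (loops) of the `F`-complement and `Ps` the paths of the
`F`-matching; a component of `F − E_Ps` is adjacent to a loop/path iff they
share an edge of `G`. -/
def LoopCycleIncidence (F : SimpleGraph V) {H : SimpleGraph V}
    (Ps : Set (FPathIn H F)) :
    SimpleGraph ((F.deleteEdges (endEdges Ps)).ConnectedComponent ⊕
      ((FComplement Ps).ConnectedComponent ⊕ ↥Ps)) where
  Adj a b := ((a.isLeft ∧ b.isRight) ∨ (a.isRight ∧ b.isLeft)) ∧
    ∃ e, e ∈ bEdgeSet F Ps a ∧ e ∈ bEdgeSet F Ps b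
  symm := by
    refine ⟨?_⟩
    rintro a b ⟨hs, e, h₁, h₂⟩
    exact ⟨by tauto, e, h₂, h₁⟩
  loopless := by
    refine ⟨?_⟩
    rintro a ⟨hs, -⟩
    rcases a with a | a <;> simp_all

/-- Remove a set of vertices from a graph (keeping them as isolated vertices):
used to form `B − Ps`. -/
def removeVerts {W : Type*} (B : SimpleGraph W) (S : Set W) : SimpleGraph W where
  Adj a b := B.Adj a b ∧ a ∉ S ∧ b ∉ S
  symm := ⟨fun a b h => ⟨h.1.symm, h.2.2, h.2.1⟩⟩
  loopless := ⟨fun a h => B.loopless.irrefl a h.1⟩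

/-- The vertices of `B` corresponding to the paths of `Ps`. -/
def PVerts (F : SimpleGraph V) {H : SimpleGraph V} (Ps : Set (FPathIn H F)) :
    Set ((F.deleteEdges (endEdges Ps)).ConnectedComponent ⊕
      ((FComplement Ps).ConnectedComponent ⊕ ↥Ps)) :=
  {x | ∃ P : ↥Ps, x = Sum.inr (Sum.inr P)}

/-- A permutation snark: a snark having a `2`-factor consisting of precisely
two chordless cycles. -/
def IsPermutationSnark (G : SimpleGraph V) : Prop :=
  IsSnark G ∧ ∃ F : SimpleGraph V, IsTwoFactor G F ∧
    Nat.card F.ConnectedComponent = 2 ∧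
    ∀ u v : V, G.Adj u v → ¬ F.Adj u v →
      F.connectedComponentMk u ≠ F.connectedComponentMk v

/-- The graph obtained from `H` (all of whose vertices have degree `2` or `3`)
by suppressing the degree-`2` vertices is `3`-edge-colorable: there is a
`3`-coloring of the edges which is constant through `2`-vertices and proper at
`3`-vertices. -/
def SuppressedThreeEdgeColorable (H : SimpleGraph V) : Prop :=
  ∃ c : Sym2 V → Fin 3,
    (∀ v : V, IsThreeVertex H v →
      ∀ e₁ ∈ H.incidenceSet v, ∀ e₂ ∈ H.incidenceSet v, e₁ ≠ e₂ → c e₁ ≠ c e₂) ∧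
    (∀ v : V, IsTwoVertex H v →
      ∀ e₁ ∈ H.incidenceSet v, ∀ e₂ ∈ H.incidenceSet v, c e₁ = c e₂)

/-- `e_r(G)`: the minimum cardinality of a set of pairwise non-adjacent edges
of `G` whose removal, followed by suppression of the resulting `2`-vertices,
yields a `3`-edge-colorable (cubic) graph. -/
noncomputable def edgeReductionNumber (G : SimpleGraph V) : ℕ :=
  sInf {n : ℕ | ∃ R : Set (Sym2 V), IsMatchingIn R G ∧
    SuppressedThreeEdgeColorable (G.deleteEdges R) ∧ R.ncard = n}

/-!
Colour the edges of `M` by `(2, 1)`, the other edges of `F` by `(0, 1)` and the remaining edges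
by `(2, 0)`. The three colours at a vertex covered by `M` sum to zero; at a vertex not covered by
`M` they sum to `(2, 0)`. Such vertices are exactly the two branch vertices `a, b` of the
Θ-components of `G − M`. As `a` and `b` each have a single edge outside `F`, one of the three
`a`–`b` paths of a Θ has both end-edges in `F`; add `±(1, 0)` along the other two paths, the sign
flipping with the `F`-type of the edge and opposite on the two paths. An inner vertex of a path
meets one `F`-edge and one non-`F`-edge of the path, so the shifts cancel there, while at `a` and
`b` they add up to `(2, 0)`. The colours stay nonzero and distinct at every vertex.
-/

def IsProperTriple {A : Type*} [AddCommGroup A] (a b c : A) : Prop :=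
  a ≠ 0 ∧ b ≠ 0 ∧ c ≠ 0 ∧ a ≠ b ∧ a ≠ c ∧ b ≠ c ∧ a + b + c = 0

lemma isProperAbelianColoring_of_incidenceSet {A : Type*} [AddCommGroup A]
    {G : SimpleGraph V} {σ : Sym2 V → A}
    (h : ∀ v, ∃ e₁ e₂ e₃, G.incidenceSet v = {e₁, e₂, e₃} ∧ IsProperTriple (σ e₁) (σ e₂) (σ e₃)) :
    IsProperAbelianColoring G σ := by
  refine ⟨fun e he => ?_, fun e₁ he₁ e₂ he₂ ⟨hne, v, hv₁, hv₂⟩ => ?_, fun v => ?_⟩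
  · obtain ⟨v, hv⟩ : ∃ v, v ∈ e := ⟨_, Sym2.out_fst_mem e⟩
    obtain ⟨f₁, f₂, f₃, hinc, h₁, h₂, h₃, -⟩ := h v
    have : e ∈ G.incidenceSet v := ⟨he, hv⟩
    rw [hinc] at this
    rcases this with rfl | rfl | rfl <;> assumption
  · obtain ⟨f₁, f₂, f₃, hinc, -, -, -, h₁₂, h₁₃, h₂₃, -⟩ := h v
    have m₁ : e₁ ∈ G.incidenceSet v := ⟨he₁, hv₁⟩
    have m₂ : e₂ ∈ G.incidenceSet v := ⟨he₂, hv₂⟩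
    rw [hinc] at m₁ m₂
    rcases m₁ with rfl | rfl | rfl <;> rcases m₂ with rfl | rfl | rfl <;>
      first | exact absurd rfl hne | assumption | exact Ne.symm ‹_›
  · obtain ⟨f₁, f₂, f₃, hinc, -, -, -, h₁₂, h₁₃, h₂₃, hsum⟩ := h v
    have : f₁ ∉ ({f₂, f₃} : Set (Sym2 V)) := by
      rintro (rfl | rfl)
      exacts [h₁₂ rfl, h₁₃ rfl]
    rw [hinc, finsum_mem_insert _ this (by simp),
      finsum_mem_pair (fun h => h₂₃ (congrArg σ h)), ← add_assoc, hsum]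

lemma incidenceSet_eq_of_neighborSet_eq {G : SimpleGraph V} {v x y z : V}
    (h : G.neighborSet v = {x, y, z}) :
    G.incidenceSet v = {s(v, x), s(v, y), s(v, z)} := by
  ext e
  constructor
  · rintro ⟨he, hv⟩
    obtain ⟨w, rfl⟩ := Sym2.mem_iff_exists.1 hv
    have hw : w ∈ G.neighborSet v := he
    rw [h] at hw
    rcases hw with rfl | rfl | rfl <;> simp
  · rintro (rfl | rfl | rfl) <;>
      exact (G.mem_incidenceSet _ _).2 (by rw [← mem_neighborSet, h]; simp)

lemma isProperTriple_of_ne_two (s : ZMod 4) (hs : s ≠ 2) :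
    IsProperTriple ((2, 1) : ZMod 4 × ZMod 2) (s, 1) (2 - s, 0) := by
  unfold IsProperTriple; revert s; decide

lemma isProperTriple_of_eq_one_or_eq_neg_one (s : ZMod 4) (hs : s = 1 ∨ s = -1) :
    IsProperTriple ((0, 1) : ZMod 4 × ZMod 2) (s, 1) (2 + s, 0) := by
  unfold IsProperTriple; revert s; decide

structure FactorFrame (G F : SimpleGraph V) (v x y z : V) : Prop where
  ne_xy : x ≠ y
  ne_xz : x ≠ z
  ne_yz : y ≠ z
  neighborSet_eq : G.neighborSet v = {x, y, z}
  adj_x : F.Adj v x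
  adj_y : F.Adj v y
  not_adj_z : ¬ F.Adj v z

namespace FactorFrame

variable {G F : SimpleGraph V} {v x y z : V}

lemma swap (h : FactorFrame G F v x y z) : FactorFrame G F v y x z :=
  ⟨h.ne_xy.symm, h.ne_yz, h.ne_xz, by rw [h.neighborSet_eq, Set.insert_comm], h.adj_y, h.adj_x,
    h.not_adj_z⟩

lemma adj_iff (h : FactorFrame G F v x y z) {u : V} : G.Adj v u ↔ u = x ∨ u = y ∨ u = z := by
  rw [← mem_neighborSet, h.neighborSet_eq]
  rfl

lemma adj_of_ne (h : FactorFrame G F v x y z) {u : V} (hu : G.Adj v u) (hz : u ≠ z) :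
    F.Adj v u := by
  rcases h.adj_iff.1 hu with rfl | rfl | rfl
  exacts [h.adj_x, h.adj_y, absurd rfl hz]

lemma adj_or_adj (h : FactorFrame G F v x y z) {u w : V} (hu : G.Adj v u) (hw : G.Adj v w)
    (huw : u ≠ w) : F.Adj v u ∨ F.Adj v w := by
  by_cases hz : u = z
  · exact Or.inr (h.adj_of_ne hw (hz ▸ huw.symm))
  · exact Or.inl (h.adj_of_ne hu hz)

lemma neighborSet_deleteEdges {M : Set (Sym2 V)} (h : FactorFrame G F v x y z)
    (hM : IsMatchingIn M F) (hx : s(v, x) ∈ M) :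
    (G.deleteEdges M).neighborSet v = {y, z} := by
  ext u
  simp only [mem_neighborSet, deleteEdges_adj, h.adj_iff, Set.mem_insert_iff,
    Set.mem_singleton_iff]
  constructor
  · rintro ⟨rfl | rfl | rfl, hu⟩
    exacts [absurd hx hu, Or.inl rfl, Or.inr rfl]
  · rintro (rfl | rfl)
    · refine ⟨Or.inr (Or.inl rfl), fun hy => hM.2 _ hx _ hy ?_ ⟨v, by simp, by simp⟩⟩
      exact fun he => h.ne_xy (Sym2.congr_right.1 he)
    · exact ⟨Or.inr (Or.inr rfl), fun hz => h.not_adj_z (hM.1 hz)⟩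

end FactorFrame

lemma exists_factorFrame {G F : SimpleGraph V} (hG : IsCubic G) (hF : IsTwoFactor G F) (v : V) :
    ∃ x y z, FactorFrame G F v x y z := by
  obtain ⟨x, y, hxy, hFv⟩ := Set.ncard_eq_two.1 (hF.2 v)
  have hsub : F.neighborSet v ⊆ G.neighborSet v := fun u hu => hF.1 hu
  have hfin : (G.neighborSet v).Finite := Set.finite_of_ncard_ne_zero (by rw [hG v]; omega)
  obtain ⟨z, hzG, hzF⟩ : ∃ z ∈ G.neighborSet v, z ∉ F.neighborSet v := by
    by_contra! hall
    have := Set.ncard_le_ncard hall (hfin.subset hsub)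
    rw [hG v, hF.2 v] at this
    omega
  rw [hFv] at hsub hzF
  simp only [Set.mem_insert_iff, Set.mem_singleton_iff, not_or] at hzF
  have hGv : G.neighborSet v = {x, y, z} := by
    refine (Set.eq_of_subset_of_ncard_le (Set.insert_subset_iff.2 ⟨hsub (by simp),
      Set.insert_subset_iff.2 ⟨hsub (by simp), by simpa using hzG⟩⟩) ?_ hfin).symm
    rw [hG v, Set.ncard_eq_three.2 ⟨x, y, z, hxy, Ne.symm hzF.1, Ne.symm hzF.2, rfl⟩]
  refine ⟨x, y, z, ⟨hxy, Ne.symm hzF.1, Ne.symm hzF.2, hGv, ?_, ?_, ?_⟩⟩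
  · show x ∈ F.neighborSet v; simp [hFv]
  · show y ∈ F.neighborSet v; simp [hFv]
  · show z ∉ F.neighborSet v; simp [hFv, hzF.1, hzF.2]

lemma exists_factorFrame_of_mem {G F : SimpleGraph V} {M : Set (Sym2 V)} (hG : IsCubic G)
    (hF : IsTwoFactor G F) (hM : IsMatchingIn M F) {e : Sym2 V} (he : e ∈ M) {v : V}
    (hv : v ∈ e) : ∃ x y z, FactorFrame G F v x y z ∧ s(v, x) ∈ M := by
  obtain ⟨x, y, z, h⟩ := exists_factorFrame hG hF v
  obtain ⟨w, rfl⟩ := Sym2.mem_iff_exists.1 hv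
  have hw : F.Adj v w := hM.1 he
  rcases h.adj_iff.1 (hF.1 hw) with rfl | rfl | rfl
  · exact ⟨w, y, z, h, he⟩
  · exact ⟨w, x, z, h.swap, he⟩
  · exact absurd hw h.not_adj_z

lemma neighborSet_deleteEdges_of_forall_notMem {G : SimpleGraph V} {M : Set (Sym2 V)} {v : V}
    (hv : ∀ e ∈ M, v ∉ e) : (G.deleteEdges M).neighborSet v = G.neighborSet v := by
  ext u
  simp only [mem_neighborSet, deleteEdges_adj, and_iff_left_iff_imp]
  exact fun _ he => hv _ he (Sym2.mem_mk_left v u)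

open Classical in
noncomputable def shiftColoring (F : SimpleGraph V) (M : Set (Sym2 V)) (τ : Sym2 V → ZMod 4)
    (e : Sym2 V) : ZMod 4 × ZMod 2 :=
  if e ∈ M then (2, 1) else if e ∈ F.edgeSet then (τ e, 1) else (2 + τ e, 0)

def IsShiftAt (G F : SimpleGraph V) (M : Set (Sym2 V)) (v : V) (t : V → ZMod 4) : Prop :=
  ∃ x y z, FactorFrame G F v x y z ∧
    (s(v, x) ∈ M ∧ t y + t z = 0 ∧ t y ≠ 2 ∨
      (∀ e ∈ M, v ∉ e) ∧ t x = 0 ∧ t z = t y ∧ (t y = 1 ∨ t y = -1))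

lemma isProperAbelianColoring_shiftColoring {G F : SimpleGraph V} {M : Set (Sym2 V)}
    {τ : Sym2 V → ZMod 4} (hM : IsMatchingIn M F)
    (h : ∀ v, IsShiftAt G F M v (fun x => τ s(v, x))) :
    IsProperAbelianColoring G (shiftColoring F M τ) := by
  refine isProperAbelianColoring_of_incidenceSet fun v => ?_
  obtain ⟨x, y, z, hfr, hcase⟩ := h v
  refine ⟨s(v, x), s(v, y), s(v, z), incidenceSet_eq_of_neighborSet_eq hfr.neighborSet_eq, ?_⟩
  have hzF : s(v, z) ∉ F.edgeSet := hfr.not_adj_z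
  have hyF : s(v, y) ∈ F.edgeSet := hfr.adj_y
  rcases hcase with ⟨hxM, hsum, hy2⟩ | ⟨hv, hx0, hzy, hy1⟩
  · have hyM : s(v, y) ∉ M := fun hyM =>
      hM.2 _ hxM _ hyM (fun he => hfr.ne_xy (Sym2.congr_right.1 he)) ⟨v, by simp, by simp⟩
    have hzM : s(v, z) ∉ M := fun hzM => hzF (hM.1 hzM)
    have hz : τ s(v, z) = -τ s(v, y) := eq_neg_of_add_eq_zero_right hsum
    simpa [shiftColoring, hxM, hyM, hzM, hyF, hzF, hz, sub_eq_add_neg]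
      using isProperTriple_of_ne_two _ hy2
  · have hxF : s(v, x) ∈ F.edgeSet := hfr.adj_x
    have hnot : ∀ u, s(v, u) ∉ M := fun u h => hv _ h (Sym2.mem_mk_left v u)
    simpa [shiftColoring, hnot, hxF, hyF, hzF, hx0, hzy]
      using isProperTriple_of_eq_one_or_eq_neg_one _ hy1

lemma exists_forall_of_forall_connectedComponent {A : Type*} [AddCommMonoid A]
    {H : SimpleGraph V} {P : V → (V → A) → Prop}
    (h : ∀ c : H.ConnectedComponent, ∃ τ : Sym2 V → A,
      (∀ e, τ e ≠ 0 → ∀ u ∈ e, u ∈ c.supp) ∧ ∀ v ∈ c.supp, P v (fun x => τ s(v, x))) :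
    ∃ τ : Sym2 V → A, ∀ v, P v (fun x => τ s(v, x)) := by
  choose τ hsupp hP using h
  refine ⟨fun e => ∑ᶠ c, τ c e, fun v => ?_⟩
  convert hP (H.connectedComponentMk v) v rfl using 2 with x
  refine finsum_eq_single _ _ fun c hc => ?_
  by_contra hne
  exact hc ((hsupp c _ hne v (Sym2.mem_mk_left v x))).symm

namespace SimpleGraph.Walk

variable {G : SimpleGraph V} {a b : V}

lemma IsPath.snd_ne_snd {p q : G.Walk a b} (hp : p.IsPath) (hq : q.IsPath) (hab : a ≠ b)
    (hpq : p ≠ q) (hd : ∀ w ∈ p.support, w ∈ q.support → w = a ∨ w = b) : p.snd ≠ q.snd := by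
  intro h
  have hnp : ¬ p.Nil := not_nil_of_ne hab
  have hnq : ¬ q.Nil := not_nil_of_ne hab
  have hq₁ : p.snd ∈ q.support := by rw [h]; exact q.getVert_mem_support 1
  rcases hd _ (p.getVert_mem_support 1) hq₁ with ha | (hb : p.snd = b)
  · exact (p.adj_snd hnp).ne ha.symm
  · have hpe := p.mk_start_snd_mem_edges hnp
    have hqe := q.mk_start_snd_mem_edges hnq
    rw [hb] at hpe
    rw [← h, hb] at hqe
    exact hpq (by rw [hp.eq_adj_toWalk_of_mem_edges hpe, hq.eq_adj_toWalk_of_mem_edges hqe])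

lemma IsPath.ncard_neighborSet_toSubgraph_of_ne {p : G.Walk a b} (hp : p.IsPath) {v : V}
    (hv : v ∈ p.support) (ha : v ≠ a) (hb : v ≠ b) :
    (p.toSubgraph.neighborSet v).ncard = 2 := by
  obtain ⟨n, rfl, hn⟩ := mem_support_iff_exists_getVert.1 hv
  refine hp.ncard_neighborSet_toSubgraph_internal_eq_two (fun h => ha ?_) (lt_of_le_of_ne hn ?_)
  · rw [h, getVert_zero]
  · rintro rfl
    exact hb p.getVert_length

lemma neighborSet_toSubgraph_eq_empty {p : G.Walk a b} {v : V} (hv : v ∉ p.support) :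
    p.toSubgraph.neighborSet v = ∅ :=
  Set.eq_empty_of_forall_notMem fun _ hw =>
    hv (p.mem_verts_toSubgraph.1 (p.toSubgraph.edge_vert hw))

end SimpleGraph.Walk

structure ThetaPaths (H : SimpleGraph V) (C : Set V) {a b : V} (p q r : H.Walk a b) : Prop where
  ne : a ≠ b
  isPath₁ : p.IsPath
  isPath₂ : q.IsPath
  isPath₃ : r.IsPath
  ne₁₂ : p ≠ q
  ne₁₃ : p ≠ r
  ne₂₃ : q ≠ r
  inter₁₂ : ∀ w ∈ p.support, w ∈ q.support → w = a ∨ w = b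
  inter₁₃ : ∀ w ∈ p.support, w ∈ r.support → w = a ∨ w = b
  inter₂₃ : ∀ w ∈ q.support, w ∈ r.support → w = a ∨ w = b
  supp_eq : C = {w | w ∈ p.support ∨ w ∈ q.support ∨ w ∈ r.support}
  neighborSet_eq : ∀ v ∈ C, H.neighborSet v =
    p.toSubgraph.neighborSet v ∪ q.toSubgraph.neighborSet v ∪ r.toSubgraph.neighborSet v

namespace ThetaPaths

variable {H : SimpleGraph V} {C : Set V} {a b : V} {p q r : H.Walk a b}

lemma of_isThetaOn (c : H.ConnectedComponent) (h : IsThetaOn H c.supp) :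
    ∃ a b : V, ∃ p q r : H.Walk a b, ThetaPaths H c.supp p q r := by
  obtain ⟨a, b, hab, p, q, r, hp, hq, hr, hpq, hpr, hqr, h₁₂, h₁₃, h₂₃, hC, hcover⟩ := h
  refine ⟨a, b, p, q, r, hab, hp, hq, hr, hpq, hpr, hqr, h₁₂, h₁₃, h₂₃, hC, fun v hv => ?_⟩
  ext x
  simp only [Set.mem_union, Subgraph.mem_neighborSet, Walk.adj_toSubgraph_iff_mem_edges,
    mem_neighborSet]
  refine ⟨fun hvx => hcover _ hvx ?_ |>.elim (Or.inl ∘ Or.inl) (Or.elim · (Or.inl ∘ Or.inr) Or.inr),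
    fun h => ?_⟩
  · have hx : x ∈ c.supp := by
      rw [ConnectedComponent.mem_supp_iff] at hv ⊢
      rw [← ConnectedComponent.connectedComponentMk_eq_of_adj hvx, hv]
    simp only [Sym2.mem_iff, forall_eq_or_imp, forall_eq]
    exact ⟨hv, hx⟩
  · rcases h with (h | h) | h <;> exact H.mem_edgeSet.1 (Walk.edges_subset_edgeSet _ h)

lemma swap₁₂ (h : ThetaPaths H C p q r) : ThetaPaths H C q p r where
  ne := h.ne
  isPath₁ := h.isPath₂
  isPath₂ := h.isPath₁
  isPath₃ := h.isPath₃
  ne₁₂ := h.ne₁₂.symm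
  ne₁₃ := h.ne₂₃
  ne₂₃ := h.ne₁₃
  inter₁₂ := fun w hq hp => h.inter₁₂ w hp hq
  inter₁₃ := h.inter₂₃
  inter₂₃ := h.inter₁₃
  supp_eq := by rw [h.supp_eq]; ext; simp only [Set.mem_ofPred_eq]; tauto
  neighborSet_eq := fun v hv => by
    rw [h.neighborSet_eq v hv, Set.union_comm (p.toSubgraph.neighborSet v)]

lemma swap₂₃ (h : ThetaPaths H C p q r) : ThetaPaths H C p r q where
  ne := h.ne
  isPath₁ := h.isPath₁
  isPath₂ := h.isPath₃
  isPath₃ := h.isPath₂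
  ne₁₂ := h.ne₁₃
  ne₁₃ := h.ne₁₂
  ne₂₃ := h.ne₂₃.symm
  inter₁₂ := h.inter₁₃
  inter₁₃ := h.inter₁₂
  inter₂₃ := fun w hr hq => h.inter₂₃ w hq hr
  supp_eq := by rw [h.supp_eq]; ext; simp only [Set.mem_ofPred_eq]; tauto
  neighborSet_eq := fun v hv => by rw [h.neighborSet_eq v hv, Set.union_right_comm]

lemma reverse (h : ThetaPaths H C p q r) : ThetaPaths H C p.reverse q.reverse r.reverse where
  ne := h.ne.symm
  isPath₁ := h.isPath₁.reverse
  isPath₂ := h.isPath₂.reverse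
  isPath₃ := h.isPath₃.reverse
  ne₁₂ := Walk.reverse_injective.ne h.ne₁₂
  ne₁₃ := Walk.reverse_injective.ne h.ne₁₃
  ne₂₃ := Walk.reverse_injective.ne h.ne₂₃
  inter₁₂ := by simpa [or_comm] using h.inter₁₂
  inter₁₃ := by simpa [or_comm] using h.inter₁₃
  inter₂₃ := by simpa [or_comm] using h.inter₂₃
  supp_eq := by simpa using h.supp_eq
  neighborSet_eq := by simpa using h.neighborSet_eq

lemma snd_ne₁₂ (h : ThetaPaths H C p q r) : p.snd ≠ q.snd :=
  h.isPath₁.snd_ne_snd h.isPath₂ h.ne h.ne₁₂ h.inter₁₂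

lemma snd_ne₁₃ (h : ThetaPaths H C p q r) : p.snd ≠ r.snd :=
  h.isPath₁.snd_ne_snd h.isPath₃ h.ne h.ne₁₃ h.inter₁₃

lemma snd_ne₂₃ (h : ThetaPaths H C p q r) : q.snd ≠ r.snd :=
  h.isPath₂.snd_ne_snd h.isPath₃ h.ne h.ne₂₃ h.inter₂₃

lemma neighborSet_start (h : ThetaPaths H C p q r) : H.neighborSet a = {p.snd, q.snd, r.snd} := by
  have ha : a ∈ C := by rw [h.supp_eq]; exact Or.inl p.start_mem_support
  have hn : ∀ T : H.Walk a b, ¬ T.Nil := fun _ => Walk.not_nil_of_ne h.ne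
  rw [h.neighborSet_eq a ha, h.isPath₁.neighborSet_toSubgraph_startpoint (hn p),
    h.isPath₂.neighborSet_toSubgraph_startpoint (hn q),
    h.isPath₃.neighborSet_toSubgraph_startpoint (hn r), Set.union_assoc, ← Set.insert_eq,
    ← Set.insert_eq]

lemma neighborSet_of_ne (h : ThetaPaths H C p q r) {v : V} (hv : v ∈ p.support) (ha : v ≠ a)
    (hb : v ≠ b) : H.neighborSet v = p.toSubgraph.neighborSet v := by
  have hC : v ∈ C := by rw [h.supp_eq]; exact Or.inl hv
  have hq : v ∉ q.support := fun hq => (h.inter₁₂ v hv hq).elim ha hb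
  have hr : v ∉ r.support := fun hr => (h.inter₁₃ v hv hr).elim ha hb
  rw [h.neighborSet_eq v hC, Walk.neighborSet_toSubgraph_eq_empty hq,
    Walk.neighborSet_toSubgraph_eq_empty hr, Set.union_empty, Set.union_empty]

end ThetaPaths

open Classical in
noncomputable def pathShift (F : SimpleGraph V) {H : SimpleGraph V} {a b : V} (p q : H.Walk a b)
    (e : Sym2 V) : ZMod 4 :=
  if e ∈ p.edges then (if e ∈ F.edgeSet then 1 else -1)
  else if e ∈ q.edges then (if e ∈ F.edgeSet then -1 else 1) else 0

section pathShift

variable {F H : SimpleGraph V} {a b : V} {p q : H.Walk a b}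

lemma pathShift_reverse : pathShift F p.reverse q.reverse = pathShift F p q := by
  funext e
  unfold pathShift
  rw [Walk.edges_reverse, Walk.edges_reverse]
  split_ifs <;> simp_all

lemma mem_edges_of_pathShift_ne_zero {e : Sym2 V} (he : pathShift F p q e ≠ 0) :
    e ∈ p.edges ∨ e ∈ q.edges := by
  unfold pathShift at he
  split_ifs at he <;> simp_all

end pathShift

lemma exists_factorFrame_of_internal {G F : SimpleGraph V} {M : Set (Sym2 V)} (hG : IsCubic G)
    (hF : IsTwoFactor G F) (hM : IsMatchingIn M F) {a b v : V}
    {p : (G.deleteEdges M).Walk a b} (hp : p.IsPath) (hv : v ∈ p.support) (ha : v ≠ a)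
    (hb : v ≠ b) (hN : (G.deleteEdges M).neighborSet v = p.toSubgraph.neighborSet v) :
    ∃ x y z, FactorFrame G F v x y z ∧ s(v, x) ∈ M ∧ s(v, y) ∈ p.edges ∧ s(v, z) ∈ p.edges := by
  have h2 := hp.ncard_neighborSet_toSubgraph_of_ne hv ha hb
  rw [← hN] at h2
  obtain ⟨e, he, hve⟩ : ∃ e ∈ M, v ∈ e := by
    by_contra! hunm
    rw [neighborSet_deleteEdges_of_forall_notMem hunm, hG v] at h2
    omega
  obtain ⟨x, y, z, hfr, hx⟩ := exists_factorFrame_of_mem hG hF hM he hve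
  have hyz := hfr.neighborSet_deleteEdges hM hx
  rw [hN] at hyz
  refine ⟨x, y, z, hfr, hx, ?_, ?_⟩ <;>
    rw [← Walk.adj_toSubgraph_iff_mem_edges, ← Subgraph.mem_neighborSet, hyz] <;> simp

namespace ThetaPaths

variable {G F : SimpleGraph V} {M : Set (Sym2 V)} {C : Set V} {a b : V}
  {p q r : (G.deleteEdges M).Walk a b}

lemma isShiftAt_start (hG : IsCubic G) (hF : IsTwoFactor G F) (hM : IsMatchingIn M F)
    (h : ThetaPaths (G.deleteEdges M) C p q r) (hr : F.Adj a r.snd) :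
    IsShiftAt G F M a (fun x => pathShift F p q s(a, x)) := by
  have hN := h.neighborSet_start
  have hunm : ∀ e ∈ M, a ∉ e := by
    intro e he ha
    obtain ⟨x, y, z, hfr, hx⟩ := exists_factorFrame_of_mem hG hF hM he ha
    have h3 := congrArg Set.ncard (hN.symm.trans (hfr.neighborSet_deleteEdges hM hx))
    rw [Set.ncard_eq_three.2 ⟨_, _, _, h.snd_ne₁₂, h.snd_ne₁₃, h.snd_ne₂₃, rfl⟩,
      Set.ncard_pair hfr.ne_yz] at h3
    omega
  have hGa : G.neighborSet a = {p.snd, q.snd, r.snd} := by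
    rw [← neighborSet_deleteEdges_of_forall_notMem hunm, hN]
  have hn : ∀ T : (G.deleteEdges M).Walk a b, ¬ T.Nil := fun _ => Walk.not_nil_of_ne h.ne
  have hp : ∀ x, s(a, x) ∈ p.edges ↔ x = p.snd := fun x =>
    ⟨h.isPath₁.eq_snd_of_mem_edges, by rintro rfl; exact p.mk_start_snd_mem_edges (hn p)⟩
  have hq : ∀ x, s(a, x) ∈ q.edges ↔ x = q.snd := fun x =>
    ⟨h.isPath₂.eq_snd_of_mem_edges, by rintro rfl; exact q.mk_start_snd_mem_edges (hn q)⟩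
  have hpp : s(a, p.snd) ∈ p.edges := (hp _).2 rfl
  have hqp : s(a, q.snd) ∉ p.edges := fun h' => h.snd_ne₁₂.symm ((hp _).1 h')
  have hqq : s(a, q.snd) ∈ q.edges := (hq _).2 rfl
  have tr : pathShift F p q s(a, r.snd) = 0 := by
    simp [pathShift, hp, hq, h.snd_ne₁₃.symm, h.snd_ne₂₃.symm]
  have hadj : ∀ u ∈ ({p.snd, q.snd, r.snd} : Set V), G.Adj a u := fun u hu => by
    rwa [← hGa] at hu
  obtain ⟨x, y, z, hfr⟩ := exists_factorFrame hG hF a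
  have hz : z ∈ ({p.snd, q.snd, r.snd} : Set V) := by
    rw [← hGa, hfr.neighborSet_eq]; simp
  rcases hz with rfl | rfl | rfl
  · have hq' : F.Adj a q.snd := hfr.adj_of_ne (hadj _ (by simp)) h.snd_ne₁₂.symm
    refine ⟨r.snd, q.snd, p.snd, ⟨h.snd_ne₂₃.symm, h.snd_ne₁₃.symm, h.snd_ne₁₂.symm, ?_, hr, hq',
      hfr.not_adj_z⟩, Or.inr ⟨hunm, tr, ?_, ?_⟩⟩
    · rw [hGa]; ext; simp only [Set.mem_insert_iff, Set.mem_singleton_iff]; tauto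
    · simp [pathShift, hpp, hqp, hqq, hq', hfr.not_adj_z]
    · simp [pathShift, hqp, hqq, hq']
  · have hp' : F.Adj a p.snd := hfr.adj_of_ne (hadj _ (by simp)) h.snd_ne₁₂
    refine ⟨r.snd, p.snd, q.snd, ⟨h.snd_ne₁₃.symm, h.snd_ne₂₃.symm, h.snd_ne₁₂, ?_, hr, hp',
      hfr.not_adj_z⟩, Or.inr ⟨hunm, tr, ?_, ?_⟩⟩
    · rw [hGa]; ext; simp only [Set.mem_insert_iff, Set.mem_singleton_iff]; tauto
    · simp [pathShift, hpp, hqp, hqq, hp', hfr.not_adj_z]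
    · simp [pathShift, hpp, hp']
  · exact absurd hr hfr.not_adj_z

lemma isShiftAt_of_ne (hG : IsCubic G) (hF : IsTwoFactor G F) (hM : IsMatchingIn M F)
    (h : ThetaPaths (G.deleteEdges M) C p q r) {v : V} (hv : v ∈ C) (ha : v ≠ a) (hb : v ≠ b) :
    IsShiftAt G F M v (fun x => pathShift F p q s(v, x)) := by
  have hnot : ∀ {T : (G.deleteEdges M).Walk a b} {x : V}, v ∉ T.support → s(v, x) ∉ T.edges :=
    fun hT he => hT (Walk.fst_mem_support_of_mem_edges _ he)
  rw [h.supp_eq] at hv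
  rcases hv with hvp | hvq | hvr
  · obtain ⟨x, y, z, hfr, hx, hy, hz⟩ := exists_factorFrame_of_internal hG hF hM h.isPath₁ hvp
      ha hb (h.neighborSet_of_ne hvp ha hb)
    refine ⟨x, y, z, hfr, Or.inl ⟨hx, ?_⟩⟩
    simp only [pathShift, hy, hz, if_true, hfr.adj_y, hfr.not_adj_z, mem_edgeSet]
    decide
  · have hvp : v ∉ p.support := fun hvp => (h.inter₁₂ v hvp hvq).elim ha hb
    obtain ⟨x, y, z, hfr, hx, hy, hz⟩ := exists_factorFrame_of_internal hG hF hM h.isPath₂ hvq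
      ha hb (h.swap₁₂.neighborSet_of_ne hvq ha hb)
    refine ⟨x, y, z, hfr, Or.inl ⟨hx, ?_⟩⟩
    simp only [pathShift, hnot hvp, hy, hz, if_true, if_false, hfr.adj_y, hfr.not_adj_z,
      mem_edgeSet]
    decide
  · have hvp : v ∉ p.support := fun hvp => (h.inter₁₃ v hvp hvr).elim ha hb
    have hvq : v ∉ q.support := fun hvq => (h.inter₂₃ v hvq hvr).elim ha hb
    obtain ⟨x, y, z, hfr, hx, -, -⟩ := exists_factorFrame_of_internal hG hF hM h.isPath₃ hvr
      ha hb (h.swap₂₃.swap₁₂.neighborSet_of_ne hvr ha hb)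
    refine ⟨x, y, z, hfr, Or.inl ⟨hx, ?_⟩⟩
    simp only [pathShift, hnot hvp, hnot hvq, if_false]
    decide

lemma isShiftAt (hG : IsCubic G) (hF : IsTwoFactor G F) (hM : IsMatchingIn M F)
    (h : ThetaPaths (G.deleteEdges M) C p q r) (hra : F.Adj a r.snd)
    (hrb : F.Adj b r.penultimate) {v : V} (hv : v ∈ C) :
    IsShiftAt G F M v (fun x => pathShift F p q s(v, x)) := by
  by_cases ha : v = a
  · subst ha
    exact h.isShiftAt_start hG hF hM hra
  by_cases hb : v = b
  · subst hb
    rw [← pathShift_reverse]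
    exact h.reverse.isShiftAt_start hG hF hM (by simpa using hrb)
  exact h.isShiftAt_of_ne hG hF hM hv ha hb

lemma adj_ends (hG : IsCubic G) (hF : IsTwoFactor G F)
    (h : ThetaPaths (G.deleteEdges M) C p q r) :
    (F.Adj a p.snd ∧ F.Adj b p.penultimate) ∨ (F.Adj a q.snd ∧ F.Adj b q.penultimate) ∨
      (F.Adj a r.snd ∧ F.Adj b r.penultimate) := by
  have hstart : ∀ {a b : V} {p q r : (G.deleteEdges M).Walk a b},
      ThetaPaths (G.deleteEdges M) C p q r →
      (F.Adj a p.snd ∨ F.Adj a q.snd) ∧ (F.Adj a p.snd ∨ F.Adj a r.snd) ∧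
        (F.Adj a q.snd ∨ F.Adj a r.snd) := by
    intro a b p q r h
    obtain ⟨x, y, z, hfr⟩ := exists_factorFrame hG hF a
    have hadj : ∀ u ∈ ({p.snd, q.snd, r.snd} : Set V), G.Adj a u := fun u hu => by
      rw [← h.neighborSet_start] at hu
      exact deleteEdges_le M hu
    exact ⟨hfr.adj_or_adj (hadj _ (by simp)) (hadj _ (by simp)) h.snd_ne₁₂,
      hfr.adj_or_adj (hadj _ (by simp)) (hadj _ (by simp)) h.snd_ne₁₃,
      hfr.adj_or_adj (hadj _ (by simp)) (hadj _ (by simp)) h.snd_ne₂₃⟩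
  have hb := hstart h.reverse
  simp only [Walk.snd_reverse] at hb
  have ha := hstart h
  tauto

end ThetaPaths

section shift

variable {G F : SimpleGraph V} {M : Set (Sym2 V)}

lemma ThetaPaths.exists_shift_of_adj {C : Set V} {a b : V} {p q r : (G.deleteEdges M).Walk a b}
    (hG : IsCubic G) (hF : IsTwoFactor G F) (hM : IsMatchingIn M F)
    (h : ThetaPaths (G.deleteEdges M) C p q r) (hra : F.Adj a r.snd)
    (hrb : F.Adj b r.penultimate) :
    ∃ τ : Sym2 V → ZMod 4, (∀ e, τ e ≠ 0 → ∀ u ∈ e, u ∈ C) ∧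
      ∀ v ∈ C, IsShiftAt G F M v (fun x => τ s(v, x)) := by
  refine ⟨pathShift F p q, fun e he u hu => ?_, fun v hv => h.isShiftAt hG hF hM hra hrb hv⟩
  rw [h.supp_eq]
  rcases mem_edges_of_pathShift_ne_zero he with he | he
  · exact Or.inl (Walk.mem_support_of_mem_edges he hu)
  · exact Or.inr (Or.inl (Walk.mem_support_of_mem_edges he hu))

lemma ThetaPaths.exists_shift {C : Set V} {a b : V} {p q r : (G.deleteEdges M).Walk a b}
    (hG : IsCubic G) (hF : IsTwoFactor G F) (hM : IsMatchingIn M F)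
    (h : ThetaPaths (G.deleteEdges M) C p q r) :
    ∃ τ : Sym2 V → ZMod 4, (∀ e, τ e ≠ 0 → ∀ u ∈ e, u ∈ C) ∧
      ∀ v ∈ C, IsShiftAt G F M v (fun x => τ s(v, x)) := by
  rcases h.adj_ends hG hF with ⟨hpa, hpb⟩ | ⟨hqa, hqb⟩ | ⟨hra, hrb⟩
  · exact h.swap₁₂.swap₂₃.exists_shift_of_adj hG hF hM hpa hpb
  · exact h.swap₂₃.exists_shift_of_adj hG hF hM hqa hqb
  · exact h.exists_shift_of_adj hG hF hM hra hrb

lemma exists_shift_on_connectedComponent (hG : IsCubic G) (hF : IsTwoFactor G F)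
    (hM : IsMatchingIn M F) (c : (G.deleteEdges M).ConnectedComponent)
    (hc : (∃ v ∈ c.supp, IsThreeVertex (G.deleteEdges M) v) →
      IsThetaOn (G.deleteEdges M) c.supp) :
    ∃ τ : Sym2 V → ZMod 4, (∀ e, τ e ≠ 0 → ∀ u ∈ e, u ∈ c.supp) ∧
      ∀ v ∈ c.supp, IsShiftAt G F M v (fun x => τ s(v, x)) := by
  by_cases h3 : ∃ v ∈ c.supp, IsThreeVertex (G.deleteEdges M) v
  · obtain ⟨a, b, p, q, r, h⟩ := ThetaPaths.of_isThetaOn c (hc h3)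
    exact h.exists_shift hG hF hM
  refine ⟨0, fun e he => absurd rfl he, fun v hv => ?_⟩
  obtain ⟨e, he, hve⟩ : ∃ e ∈ M, v ∈ e := by
    by_contra! hunm
    refine h3 ⟨v, hv, ?_⟩
    rw [IsThreeVertex, neighborSet_deleteEdges_of_forall_notMem hunm, hG v]
  obtain ⟨x, y, z, hfr, hx⟩ := exists_factorFrame_of_mem hG hF hM he hve
  exact ⟨x, y, z, hfr, Or.inl ⟨hx, by simp only [Pi.zero_apply]; decide⟩⟩

end shift

theorem statement3_general {V : Type*} (G F : SimpleGraph V) (M : Set (Sym2 V))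
    (hG : IsSnark G)
    (hF : IsTwoFactor G F)
    (hM : IsMaximumMatchingIn M F)
    (hmain : ∀ C : (G.deleteEdges M).ConnectedComponent,
      (∃ v ∈ C.supp, IsThreeVertex (G.deleteEdges M) v) →
        IsThetaOn (G.deleteEdges M) C.supp) :
    ∃ σ : Sym2 V → ZMod 4 × ZMod 2, IsProperAbelianColoring G σ := by
  obtain ⟨τ, hτ⟩ := exists_forall_of_forall_connectedComponent fun c =>
    exists_shift_on_connectedComponent hG.2.2.1 hF hM.1 c (hmain c)
  exact ⟨shiftColoring F M τ, isProperAbelianColoring_shiftColoring hM.1 hτ⟩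

theorem statement3 {V : Type*} [Fintype V] (G F : SimpleGraph V) (M : Set (Sym2 V))
    (hG : IsSnark G) (hodd : oddness G = 2)
    (hF : IsTwoFactor G F) (hFodd : oddCompCount F = 2)
    (hM : IsMaximumMatchingIn M F)
    (hmain : ∀ C : (G.deleteEdges M).ConnectedComponent,
      (∃ v ∈ C.supp, IsThreeVertex (G.deleteEdges M) v) →
        IsThetaOn (G.deleteEdges M) C.supp) :
    ∃ σ : Sym2 V → ZMod 4 × ZMod 2, IsProperAbelianColoring G σ :=
  statement3_general G F M hG hF hM hmain
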